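/- Cat-code MacWilliams identity (Hankel transform with modified Bessel output): For all real r ≥ 0 and α ≥ 0, ∫_0^∞ J_0(r·x)·x·e^{−x²/2}·(1 + J_0(2α·x)) dx = e^{−r²/2}·(1 + e^{−2α²}·I_0(2α·r)). Consequently, the primary weight distribution A(x) = 4πx·e^{−x²/2}(1 + J_0(2αx)) of the two-legged cat code with well-separated coherent states of amplitude norm α has dual weight distribution B(r) = r·∫_0^∞ J_0(rx)·A(x) dx = 4πr·e^{−r²/2}(1 + e^{−2α²}·I_0(2αr)). -/

import Mathlib

/-!
With `F z = ∑ zᵏ / k!²` (`besselSeries`) we have `J₀ y = F (-(y/2)²)`, `I₀ y = F ((y/2)²)` and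
`1 = F 0`, so with `a = -(r/2)²` the theorem is the sum of the cases `b = 0` and `b = -α²` of
Weber's integral `∫₀^∞ F (a x²) F (b x²) x e^{-x²/2} dx = e^{2a} e^{2b} F (4ab)`.

To prove the latter, multiply the two power series and integrate termwise with
`∫₀^∞ x^{2n+1} e^{-x²/2} dx = 2ⁿ n!`; with `s = 2a`, `t = 2b` this gives
`∑_{k,j} (k+j)! / (k!² j!²) sᵏ tʲ`, absolutely convergent because the same series in `|s|, |t|`
is. That double series is `eˢ eᵗ F (st)`: expand `eˢ sᵐ/m! = ∑ₖ C(k,m) sᵏ/k!` and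
`eᵗ tᵐ/m! = ∑ⱼ C(j,m) tʲ/j!`, sum over `m` first, and use Vandermonde's identity
`∑ₘ C(k,m) C(j,m) = C(k+j,k)`.
-/

open Real MeasureTheory

noncomputable def besselJ0 (x : ℝ) : ℝ :=
  ∑' k : ℕ, (-1 : ℝ) ^ k / ((k.factorial : ℝ)) ^ 2 * (x / 2) ^ (2 * k)

noncomputable def besselI0 (x : ℝ) : ℝ :=
  ∑' k : ℕ, (x / 2) ^ (2 * k) / ((k.factorial : ℝ)) ^ 2

open Set
open scoped Nat

noncomputable def besselSeries (z : ℝ) : ℝ := ∑' k : ℕ, z ^ k / (k ! : ℝ) ^ 2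

lemma summable_pow_div_factorial_sq (z : ℝ) : Summable fun k : ℕ ↦ z ^ k / (k ! : ℝ) ^ 2 := by
  refine (Real.summable_pow_div_factorial |z|).of_norm_bounded fun k ↦ ?_
  have hk : (1 : ℝ) ≤ k ! := by exact_mod_cast k.factorial_pos
  rw [norm_div, norm_pow, Real.norm_eq_abs, norm_pow, Real.norm_natCast]
  exact div_le_div_of_nonneg_left (by positivity) (by positivity) (by nlinarith)

lemma besselJ0_eq_besselSeries (y : ℝ) : besselJ0 y = besselSeries (-(y / 2) ^ 2) :=
  tsum_congr fun k ↦ by rw [pow_mul, neg_pow ((y / 2) ^ 2), div_mul_eq_mul_div]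

lemma besselJ0_mul_eq_besselSeries (r x : ℝ) :
    besselJ0 (r * x) = besselSeries (-(r / 2) ^ 2 * x ^ 2) := by
  rw [besselJ0_eq_besselSeries]
  ring_nf

lemma besselI0_eq_besselSeries (y : ℝ) : besselI0 y = besselSeries ((y / 2) ^ 2) :=
  tsum_congr fun k ↦ by rw [pow_mul]

lemma besselSeries_zero : besselSeries 0 = 1 := by
  rw [besselSeries, tsum_eq_single 0 fun k hk ↦ by simp [hk]]
  simp

lemma sum_range_choose_mul_choose (k j : ℕ) :
    ∑ m ∈ Finset.range (j + 1), k.choose m * j.choose m = (k + j).choose k := by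
  rw [Nat.choose_symm_add, Nat.add_choose_eq, Finset.Nat.sum_antidiagonal_eq_sum_range_succ_mk]
  refine Finset.sum_congr rfl fun m hm ↦ ?_
  rw [Nat.choose_symm (Nat.lt_succ_iff.mp (Finset.mem_range.mp hm))]

noncomputable def binomExpTerm (s : ℝ) (m k : ℕ) : ℝ := s ^ k * k.choose m / k !

lemma abs_binomExpTerm (s : ℝ) (m k : ℕ) : |binomExpTerm s m k| = binomExpTerm |s| m k := by
  simp [binomExpTerm, abs_div, abs_mul, abs_pow]

lemma hasSum_binomExpTerm (s : ℝ) (m : ℕ) :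
    HasSum (binomExpTerm s m) (s ^ m / m ! * exp s) := by
  rw [← hasSum_nat_add_iff' m, Finset.sum_eq_zero fun k hk ↦ by
    rw [binomExpTerm, Nat.choose_eq_zero_of_lt (Finset.mem_range.mp hk)]; simp, sub_zero]
  have hexp : HasSum (fun a : ℕ ↦ s ^ a / a !) (exp s) :=
    Real.exp_eq_exp_ℝ ▸ NormedSpace.expSeries_div_hasSum_exp s
  refine (hexp.mul_left (s ^ m / m !)).congr_fun fun a ↦ ?_
  rw [binomExpTerm, add_comm a m, Nat.cast_choose ℝ (Nat.le_add_right m a),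
    Nat.add_sub_cancel_left, pow_add]
  field_simp

lemma summable_norm_binomExpTerm (s : ℝ) (m : ℕ) : Summable fun k ↦ ‖binomExpTerm s m k‖ := by
  simpa only [Real.norm_eq_abs, abs_binomExpTerm] using (hasSum_binomExpTerm |s| m).summable

lemma hasSum_binomExpTerm_mul_binomExpTerm (s t : ℝ) (m : ℕ) :
    HasSum (fun kj : ℕ × ℕ ↦ binomExpTerm s m kj.1 * binomExpTerm t m kj.2)
      (exp s * exp t * ((s * t) ^ m / (m ! : ℝ) ^ 2)) := by
  have h := (hasSum_binomExpTerm s m).mul (hasSum_binomExpTerm t m)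
    (summable_mul_of_summable_norm (summable_norm_binomExpTerm s m)
      (summable_norm_binomExpTerm t m))
  rwa [show s ^ m / m ! * exp s * (t ^ m / m ! * exp t)
    = exp s * exp t * ((s * t) ^ m / (m ! : ℝ) ^ 2) by ring] at h

noncomputable def weberCoeff (a b : ℝ) (p : ℕ × ℕ) : ℝ :=
  a ^ p.1 / (p.1 ! : ℝ) ^ 2 * (b ^ p.2 / (p.2 ! : ℝ) ^ 2)

lemma abs_weberCoeff (a b : ℝ) (p : ℕ × ℕ) : |weberCoeff a b p| = weberCoeff |a| |b| p := by
  simp only [weberCoeff, abs_mul, abs_div, abs_pow, Nat.abs_cast]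

lemma hasSum_binomExpTerm_mul_binomExpTerm_eq_weberCoeff (s t : ℝ) (k j : ℕ) :
    HasSum (fun m ↦ binomExpTerm s m k * binomExpTerm t m j)
      (weberCoeff s t (k, j) * (k + j)!) := by
  have hsupp : ∀ m ∉ Finset.range (j + 1), binomExpTerm s m k * binomExpTerm t m j = 0 :=
    fun m hm ↦ by
      rw [binomExpTerm, binomExpTerm, Nat.choose_eq_zero_of_lt (by simpa using hm : j < m)]
      simp
  have hvandermonde : ∑ m ∈ Finset.range (j + 1), (k.choose m * j.choose m : ℝ)
      = (k + j)! / (k ! * j !) := by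
    have hchoose := Nat.cast_choose ℝ (Nat.le_add_right k j)
    rw [Nat.add_sub_cancel_left] at hchoose
    rw [← hchoose, ← sum_range_choose_mul_choose]
    push_cast; rfl
  have hsum : weberCoeff s t (k, j) * (k + j)!
      = ∑ m ∈ Finset.range (j + 1), binomExpTerm s m k * binomExpTerm t m j := by
    simp only [binomExpTerm, weberCoeff]
    calc _ = s ^ k * t ^ j / (k ! * j !) * ((k + j)! / (k ! * j !) : ℝ) := by
          field_simp
      _ = _ := by rw [← hvandermonde, Finset.mul_sum]; exact Finset.sum_congr rfl fun m _ ↦ by ring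
  exact hsum ▸ hasSum_sum_of_ne_finset_zero hsupp

lemma summable_binomExpTerm_mul_binomExpTerm (s t : ℝ) :
    Summable fun q : ℕ × (ℕ × ℕ) ↦ binomExpTerm s q.1 q.2.1 * binomExpTerm t q.1 q.2.2 := by
  refine Summable.of_norm ?_
  simp only [norm_mul, Real.norm_eq_abs, abs_binomExpTerm]
  refine (summable_prod_of_nonneg fun q ↦ by simp only [binomExpTerm]; positivity).mpr
    ⟨fun m ↦ (hasSum_binomExpTerm_mul_binomExpTerm |s| |t| m).summable, ?_⟩
  simp only [fun m ↦ (hasSum_binomExpTerm_mul_binomExpTerm |s| |t| m).tsum_eq]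
  exact (summable_pow_div_factorial_sq _).mul_left _

lemma hasSum_weberCoeff_mul_factorial (s t : ℝ) :
    HasSum (fun p ↦ weberCoeff s t p * (p.1 + p.2)!) (exp s * exp t * besselSeries (s * t)) := by
  have hG := summable_binomExpTerm_mul_binomExpTerm s t
  have hsum : HasSum (fun q : ℕ × (ℕ × ℕ) ↦ binomExpTerm s q.1 q.2.1 * binomExpTerm t q.1 q.2.2)
      (exp s * exp t * besselSeries (s * t)) := by
    convert hG.hasSum
    exact ((summable_pow_div_factorial_sq (s * t)).hasSum.mul_left _).unique
      (hG.hasSum.prod_fiberwise (hasSum_binomExpTerm_mul_binomExpTerm s t))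
  exact ((Equiv.prodComm _ _).symm.hasSum_iff.mpr hsum).prod_fiberwise
    fun kj ↦ hasSum_binomExpTerm_mul_binomExpTerm_eq_weberCoeff s t kj.1 kj.2

lemma integrable_tsum_of_summable_integral_norm {α E ι : Type*} [MeasurableSpace α]
    {μ : Measure α} [NormedAddCommGroup E] [CompleteSpace E] [Countable ι] {F : ι → α → E}
    (hF_int : ∀ i, Integrable (F i) μ) (hF_sum : Summable fun i ↦ ∫ a, ‖F i a‖ ∂μ) :
    Integrable (fun a ↦ ∑' i, F i a) μ := by
  refine ⟨AEStronglyMeasurable.tsum fun i ↦ (hF_int i).1, ?_⟩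
  rw [hasFiniteIntegral_iff_enorm]
  calc ∫⁻ a, ‖∑' i, F i a‖ₑ ∂μ ≤ ∫⁻ a, ∑' i, ‖F i a‖ₑ ∂μ :=
        lintegral_mono fun a ↦ enorm_tsum_le_tsum_enorm
    _ = ∑' i, ∫⁻ a, ‖F i a‖ₑ ∂μ := lintegral_tsum fun i ↦ (hF_int i).1.enorm
    _ = ENNReal.ofReal (∑' i, ∫ a, ‖F i a‖ ∂μ) := by
        rw [ENNReal.ofReal_tsum_of_nonneg (fun i ↦ integral_nonneg fun a ↦ norm_nonneg _) hF_sum]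
        simp_rw [ofReal_integral_norm_eq_lintegral_enorm (hF_int _)]
    _ < ⊤ := ENNReal.ofReal_lt_top

lemma integrableOn_Ioi_pow_mul_exp_neg_sq_div_two (n : ℕ) :
    IntegrableOn (fun x : ℝ ↦ x ^ (2 * n + 1) * exp (-x ^ 2 / 2)) (Ioi 0) := by
  have h := integrableOn_rpow_mul_exp_neg_mul_sq (b := 1 / 2) (by norm_num)
    (s := (2 * n + 1 : ℕ)) (by linarith [(Nat.cast_nonneg (2 * n + 1) : (0 : ℝ) ≤ _)])
  refine h.congr_fun (fun x _ ↦ ?_) measurableSet_Ioi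
  dsimp only
  rw [Real.rpow_natCast]
  ring_nf

lemma integral_Ioi_pow_mul_exp_neg_sq_div_two (n : ℕ) :
    ∫ x in Ioi (0 : ℝ), x ^ (2 * n + 1) * exp (-x ^ 2 / 2) = 2 ^ n * n ! := by
  have h := integral_rpow_mul_exp_neg_mul_rpow (p := 2) (q := (2 * n + 1 : ℕ)) (b := 1 / 2)
    (by norm_num) (by linarith [(Nat.cast_nonneg (2 * n + 1) : (0 : ℝ) ≤ _)]) (by norm_num)
  have hq : (((2 * n + 1 : ℕ) : ℝ) + 1) / 2 = n + 1 := by push_cast; ring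
  rw [neg_div, hq, Real.Gamma_nat_eq_factorial, Real.rpow_neg (by norm_num), one_div,
    Real.inv_rpow (by norm_num), inv_inv, ← Nat.cast_succ, Real.rpow_natCast] at h
  rw [Nat.succ_eq_add_one, pow_succ, mul_inv_cancel_right₀ (two_ne_zero' ℝ)] at h
  rw [← h]
  refine setIntegral_congr_fun measurableSet_Ioi fun x _ ↦ ?_
  rw [Real.rpow_natCast, Real.rpow_two]
  ring_nf

lemma integral_norm_const_mul_pow_mul_exp_neg_sq_div_two (c : ℝ) (n : ℕ) :
    ∫ x in Ioi (0 : ℝ), ‖c * (x ^ (2 * n + 1) * exp (-x ^ 2 / 2))‖ = |c| * (2 ^ n * n !) := by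
  rw [← integral_Ioi_pow_mul_exp_neg_sq_div_two, ← integral_const_mul]
  refine setIntegral_congr_fun measurableSet_Ioi fun x (hx : 0 < x) ↦ ?_
  rw [norm_mul, Real.norm_eq_abs, Real.norm_of_nonneg (by positivity)]

section GaussianMoments

variable {ι : Type*} [Countable ι] (c : ι → ℝ) (n : ι → ℕ)

lemma integrableOn_tsum_mul_pow_mul_exp_neg_sq_div_two
    (hc : Summable fun i ↦ |c i| * (2 ^ n i * (n i)!)) :
    IntegrableOn (fun x ↦ ∑' i, c i * (x ^ (2 * n i + 1) * exp (-x ^ 2 / 2))) (Ioi 0) :=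
  integrable_tsum_of_summable_integral_norm
    (fun i ↦ (integrableOn_Ioi_pow_mul_exp_neg_sq_div_two (n i)).const_mul (c i))
    (by simpa only [integral_norm_const_mul_pow_mul_exp_neg_sq_div_two] using hc)

lemma integral_tsum_mul_pow_mul_exp_neg_sq_div_two
    (hc : Summable fun i ↦ |c i| * (2 ^ n i * (n i)!)) :
    ∫ x in Ioi (0 : ℝ), ∑' i, c i * (x ^ (2 * n i + 1) * exp (-x ^ 2 / 2))
      = ∑' i, c i * (2 ^ n i * (n i)!) := by
  rw [← integral_tsum_of_summable_integral_norm
    (fun i ↦ (integrableOn_Ioi_pow_mul_exp_neg_sq_div_two (n i)).const_mul (c i))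
    (by simpa only [integral_norm_const_mul_pow_mul_exp_neg_sq_div_two] using hc)]
  simp only [integral_const_mul, integral_Ioi_pow_mul_exp_neg_sq_div_two]

end GaussianMoments

lemma besselSeries_mul_besselSeries_mul_gaussian (a b x : ℝ) :
    besselSeries (a * x ^ 2) * besselSeries (b * x ^ 2) * (x * exp (-x ^ 2 / 2))
      = ∑' p : ℕ × ℕ, weberCoeff a b p * (x ^ (2 * (p.1 + p.2) + 1) * exp (-x ^ 2 / 2)) := by
  rw [besselSeries, besselSeries, tsum_mul_tsum_of_summable_norm
    (summable_pow_div_factorial_sq _).norm (summable_pow_div_factorial_sq _).norm,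
    ← tsum_mul_right]
  exact tsum_congr fun p ↦ by rw [weberCoeff]; ring

lemma weberCoeff_mul_two_pow_mul_factorial (a b : ℝ) (p : ℕ × ℕ) :
    weberCoeff a b p * (2 ^ (p.1 + p.2) * (p.1 + p.2)!)
      = weberCoeff (2 * a) (2 * b) p * (p.1 + p.2)! := by
  simp only [weberCoeff]
  ring

lemma summable_abs_weberCoeff_mul_two_pow_mul_factorial (a b : ℝ) :
    Summable fun p : ℕ × ℕ ↦ |weberCoeff a b p| * (2 ^ (p.1 + p.2) * (p.1 + p.2)!) := by
  simp only [abs_weberCoeff, weberCoeff_mul_two_pow_mul_factorial]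
  exact (hasSum_weberCoeff_mul_factorial _ _).summable

lemma integrableOn_besselSeries_mul_besselSeries_mul_gaussian (a b : ℝ) :
    IntegrableOn
      (fun x ↦ besselSeries (a * x ^ 2) * besselSeries (b * x ^ 2) * (x * exp (-x ^ 2 / 2)))
      (Ioi 0) := by
  simp only [besselSeries_mul_besselSeries_mul_gaussian a b]
  exact integrableOn_tsum_mul_pow_mul_exp_neg_sq_div_two (weberCoeff a b) (fun p ↦ p.1 + p.2)
    (summable_abs_weberCoeff_mul_two_pow_mul_factorial a b)

lemma integral_besselSeries_mul_besselSeries_mul_gaussian (a b : ℝ) :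
    ∫ x in Ioi (0 : ℝ),
        besselSeries (a * x ^ 2) * besselSeries (b * x ^ 2) * (x * exp (-x ^ 2 / 2))
      = exp (2 * a) * exp (2 * b) * besselSeries (4 * a * b) := by
  simp only [besselSeries_mul_besselSeries_mul_gaussian a b]
  rw [integral_tsum_mul_pow_mul_exp_neg_sq_div_two (weberCoeff a b) (fun p ↦ p.1 + p.2)
      (summable_abs_weberCoeff_mul_two_pow_mul_factorial a b),
    show 4 * a * b = 2 * a * (2 * b) by ring, ← (hasSum_weberCoeff_mul_factorial _ _).tsum_eq]
  exact tsum_congr (weberCoeff_mul_two_pow_mul_factorial a b)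

theorem hankel_cat_code_general (r α : ℝ) :
    ∫ x in Set.Ioi (0 : ℝ),
        besselJ0 (r * x) * x * Real.exp (-x ^ 2 / 2) * (1 + besselJ0 (2 * α * x)) =
      Real.exp (-r ^ 2 / 2) * (1 + Real.exp (-2 * α ^ 2) * besselI0 (2 * α * r)) := by
  have hsplit : ∀ x : ℝ,
      besselJ0 (r * x) * x * exp (-x ^ 2 / 2) * (1 + besselJ0 (2 * α * x))
        = besselSeries (-(r / 2) ^ 2 * x ^ 2) * besselSeries (0 * x ^ 2) * (x * exp (-x ^ 2 / 2))
          + besselSeries (-(r / 2) ^ 2 * x ^ 2) * besselSeries (-α ^ 2 * x ^ 2)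
            * (x * exp (-x ^ 2 / 2)) := fun x ↦ by
    rw [besselJ0_mul_eq_besselSeries, besselJ0_mul_eq_besselSeries, zero_mul, besselSeries_zero]
    ring_nf
  simp only [hsplit]
  rw [integral_add (integrableOn_besselSeries_mul_besselSeries_mul_gaussian _ _)
      (integrableOn_besselSeries_mul_besselSeries_mul_gaussian _ _),
    integral_besselSeries_mul_besselSeries_mul_gaussian,
    integral_besselSeries_mul_besselSeries_mul_gaussian, besselI0_eq_besselSeries,
    mul_zero, mul_zero, exp_zero, besselSeries_zero]
  ring_nf

/-- Cat-code MacWilliams identity (Hankel transform with modified Bessel output):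
`∫_0^∞ J_0(rx)·x·e^{−x²/2}·(1 + J_0(2αx)) dx = e^{−r²/2}·(1 + e^{−2α²}·I_0(2αr))`. -/
theorem hankel_cat_code (r α : ℝ) (hr : 0 ≤ r) (hα : 0 ≤ α) :
    ∫ x in Set.Ioi (0 : ℝ),
        besselJ0 (r * x) * x * Real.exp (-x ^ 2 / 2) * (1 + besselJ0 (2 * α * x)) =
      Real.exp (-r ^ 2 / 2) * (1 + Real.exp (-2 * α ^ 2) * besselI0 (2 * α * r)) :=
  hankel_cat_code_general r α
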